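/- Let q be a positive integer, r a positive integer coprime to q, and c an integer. Then the number of integers a with 1 ≤ a ≤ q, gcd(a,q)=1, and a ≡ c (mod r) equals φ(q)/r + O(τ(q)), where τ is the number-of-divisors function. More precisely, the absolute difference between the count and φ(q)/r is at most τ(q). -/

import Mathlib

open Finset ArithmeticFunction
open scoped ArithmeticFunction.Moebius ArithmeticFunction.zeta

private lemma aux_musum (n : ℕ) :
    ∑ d ∈ n.divisors, (μ d : ℤ) = if n = 1 then 1 else 0 := by
  have h : ((μ * ζ : ArithmeticFunction ℤ)) n = (1 : ArithmeticFunction ℤ) n := by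
    rw [moebius_mul_coe_zeta]
  rwa [coe_mul_zeta_apply, one_apply] at h

private lemma aux_count (q : ℕ) (hq : 0 < q) (P : ℕ → Prop) [DecidablePred P] :
    ((((Finset.Icc 1 q).filter (fun a => Nat.Coprime a q ∧ P a)).card : ℤ)) =
      ∑ d ∈ q.divisors,
        (μ d) * (((Finset.Icc 1 q).filter (fun a => d ∣ a ∧ P a)).card : ℤ) := by
  have h1 : ((Finset.Icc 1 q).filter (fun a => Nat.Coprime a q ∧ P a))
      = (((Finset.Icc 1 q).filter P).filter (fun a => Nat.Coprime a q)) := by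
    rw [filter_filter]
    simp only [and_comm]
  rw [h1, ← Finset.sum_boole]
  have h2 : ∀ a ∈ (Finset.Icc 1 q).filter P,
      (if Nat.Coprime a q then (1:ℤ) else 0) = ∑ d ∈ q.divisors, if d ∣ a then (μ d : ℤ) else 0 := by
    intro a _
    rw [← Finset.sum_filter]
    have h3 : q.divisors.filter (· ∣ a) = (Nat.gcd a q).divisors := by
      ext d
      simp only [Nat.mem_divisors, Finset.mem_filter, Nat.dvd_gcd_iff]
      constructor
      · rintro ⟨⟨hdq, hq0⟩, hda⟩
        exact ⟨⟨hda, hdq⟩, Nat.gcd_ne_zero_right hq0⟩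
      · rintro ⟨⟨hda, hdq⟩, -⟩
        exact ⟨⟨hdq, hq.ne'⟩, hda⟩
    rw [h3, aux_musum]
  rw [Finset.sum_congr rfl h2, Finset.sum_comm]
  refine Finset.sum_congr rfl fun d _ => ?_
  rw [← Finset.sum_filter, Finset.sum_const, Finset.filter_filter, nsmul_eq_mul, mul_comm]
  have : (Finset.Icc 1 q).filter (fun a => P a ∧ d ∣ a)
      = (Finset.Icc 1 q).filter (fun a => d ∣ a ∧ P a) :=
    Finset.filter_congr fun a _ => and_comm
  rw [this]

private lemma aux_interval (m : ℤ) (hm : 0 < m) (v : ℤ) (N : ℕ) :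
    |((((Finset.Ioc (0:ℤ) (N:ℤ)).filter (fun x => x ≡ v [ZMOD m])).card : ℝ)) - (N:ℝ) / (m:ℝ)| ≤ 1 := by
  have hcard := Int.Ioc_filter_modEq_card (0:ℤ) (N:ℤ) hm v
  have hmq : (0:ℚ) < (m:ℚ) := by exact_mod_cast hm
  have hle : ((0:ℚ) - v) / (m:ℚ) ≤ ((N:ℚ) - v) / (m:ℚ) := by
    gcongr
    positivity
  have h0 : (0:ℤ) ≤ ⌊(((N:ℤ):ℚ) - v) / (m:ℚ)⌋ - ⌊(((0:ℤ):ℚ) - v) / (m:ℚ)⌋ := by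
    have := Int.floor_mono hle
    push_cast at this ⊢
    omega
  rw [max_eq_left h0] at hcard
  set A := ⌊(((N:ℤ):ℚ) - v) / (m:ℚ)⌋ with hA
  set B := ⌊(((0:ℤ):ℚ) - v) / (m:ℚ)⌋ with hB
  have key : |(A:ℚ) - (B:ℚ) - (N:ℚ) / (m:ℚ)| ≤ 1 := by
    have hA1 : (A:ℚ) ≤ ((N:ℚ) - v) / m := by
      rw [hA]; push_cast; exact Int.floor_le _
    have hA2 : ((N:ℚ) - v) / m - 1 < (A:ℚ) := by
      rw [hA]; push_cast; linarith [Int.lt_floor_add_one (((N:ℚ) - v) / (m:ℚ))]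
    have hB1 : (B:ℚ) ≤ ((0:ℚ) - v) / m := by
      rw [hB]; push_cast; exact Int.floor_le _
    have hB2 : ((0:ℚ) - v) / m - 1 < (B:ℚ) := by
      rw [hB]; push_cast; linarith [Int.lt_floor_add_one (((0:ℚ) - v) / (m:ℚ))]
    have hsplit : ((N:ℚ) - v) / m - ((0:ℚ) - v) / m = (N:ℚ) / m := by
      field_simp
      ring
    rw [abs_le]
    constructor <;> nlinarith
  have hcardQ : ((((Finset.Ioc (0:ℤ) (N:ℤ)).filter (fun x => x ≡ v [ZMOD m])).card : ℚ))
      = (A:ℚ) - (B:ℚ) := by exact_mod_cast hcard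
  have : |((((Finset.Ioc (0:ℤ) (N:ℤ)).filter (fun x => x ≡ v [ZMOD m])).card : ℚ)) - (N:ℚ)/(m:ℚ)| ≤ 1 := by
    rw [hcardQ]; exact key
  have h2 := (Rat.cast_le (K := ℝ)).mpr this
  push_cast at h2
  exact h2

private lemma aux_crt (d r : ℕ) (h : Nat.Coprime d r) (c : ℤ) :
    ∃ v : ℤ, ∀ x : ℤ, ((d:ℤ) ∣ x ∧ x ≡ c [ZMOD r]) ↔ x ≡ v [ZMOD ((d:ℤ) * r)] := by
  obtain ⟨u, w, huw⟩ := Nat.isCoprime_iff_coprime.mpr h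
  refine ⟨c * (u * d), fun x => ?_⟩
  have hvd : (d:ℤ) ∣ c * (u * d) := ⟨c * u, by ring⟩
  have hvr : c * (u * d) ≡ c [ZMOD r] := by
    rw [Int.modEq_iff_dvd]
    exact ⟨c * w, by linear_combination -c * huw⟩
  constructor
  · rintro ⟨hx, hc⟩
    rw [Int.modEq_iff_dvd]
    refine IsCoprime.mul_dvd ⟨u, w, huw⟩ (dvd_sub hvd hx) ?_
    exact Int.ModEq.dvd (hc.trans hvr.symm)
  · intro hxy
    have hd : (d:ℤ) ∣ c * (u * d) - x :=
      dvd_trans (dvd_mul_right _ _) (Int.modEq_iff_dvd.mp hxy)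
    have hrr : x ≡ c * (u * d) [ZMOD r] := hxy.of_dvd (dvd_mul_left _ _)
    exact ⟨by simpa using dvd_sub hvd hd, hrr.trans hvr⟩

private lemma aux_cast (q d : ℕ) (r : ℕ) (c : ℤ) :
    (((Finset.Icc 1 q).filter (fun a => d ∣ a ∧ (a:ℤ) ≡ c [ZMOD r])).card) =
    (((Finset.Ioc (0:ℤ) (q:ℤ)).filter (fun x => (d:ℤ) ∣ x ∧ x ≡ c [ZMOD r])).card) := by
  apply Finset.card_bij (fun (a : ℕ) _ => (a:ℤ))
  · intro a ha
    simp only [Finset.mem_filter, Finset.mem_Icc, Finset.mem_Ioc] at ha ⊢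
    refine ⟨⟨by exact_mod_cast ha.1.1, by exact_mod_cast ha.1.2⟩,
      Int.natCast_dvd_natCast.mpr ha.2.1, ha.2.2⟩
  · intro a _ b _ hab
    exact_mod_cast hab
  · intro x hx
    simp only [Finset.mem_filter, Finset.mem_Ioc] at hx
    refine ⟨x.toNat, ?_, ?_⟩
    · simp only [Finset.mem_filter, Finset.mem_Icc]
      have htn : ((x.toNat : ℤ)) = x := Int.toNat_of_nonneg hx.1.1.le
      refine ⟨⟨?_, ?_⟩, ?_, ?_⟩
      · omega
      · omega
      · exact Int.natCast_dvd_natCast.mp (htn ▸ hx.2.1)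
      · rw [htn]; exact hx.2.2
    · exact Int.toNat_of_nonneg hx.1.1.le

/-- The number of `a` with `1 ≤ a ≤ q`, `gcd(a,q) = 1` and `a ≡ c (mod r)`
differs from `φ(q)/r` by at most `τ(q)`, when `gcd(r,q) = 1`. -/
theorem stmt_0 (q r : ℕ) (hq : 0 < q) (hr : 0 < r) (hrq : Nat.Coprime r q) (c : ℤ) :
    |((((Finset.Icc 1 q).filter
        (fun a => Nat.Coprime a q ∧ (a : ℤ) ≡ c [ZMOD r])).card : ℝ))
      - (Nat.totient q : ℝ) / r| ≤ (q.divisors.card : ℝ) := by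
  classical
  have h1 := aux_count q hq (fun a => (a:ℤ) ≡ c [ZMOD r])
  have h2 := aux_count q hq (fun _ => True)
  have htot : ((Finset.Icc 1 q).filter (fun a => Nat.Coprime a q ∧ True)).card = q.totient := by
    have h3 := Nat.filter_coprime_Ico_eq_totient q 1
    rw [← h3]
    rw [add_comm, Finset.Ico_add_one_right_eq_Icc]
    congr 1
    apply Finset.filter_congr
    intro a _
    simp [Nat.coprime_comm]
  have hdvd : ∀ d ∈ q.divisors,
      ((Finset.Icc 1 q).filter (fun a => d ∣ a ∧ True)).card = q / d := by
    intro d _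
    have : Finset.Icc 1 q = Finset.Ioc 0 q := by
      rw [← Finset.Icc_add_one_left_eq_Ioc, zero_add]
    rw [this]
    simp only [and_true]
    exact Nat.Ioc_filter_dvd_card_eq_div q d
  rw [htot] at h2
  rw [Finset.sum_congr rfl (fun d hd => by rw [hdvd d hd])] at h2
  -- real versions
  have hL : ((((Finset.Icc 1 q).filter
        (fun a => Nat.Coprime a q ∧ (a : ℤ) ≡ c [ZMOD r])).card : ℝ))
      = ∑ d ∈ q.divisors, (μ d : ℝ) *
          (((Finset.Icc 1 q).filter (fun a => d ∣ a ∧ (a:ℤ) ≡ c [ZMOD r])).card : ℝ) := by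
    exact_mod_cast h1
  have hR : (q.totient : ℝ) / r
      = ∑ d ∈ q.divisors, (μ d : ℝ) * ((q:ℝ) / ((d:ℝ) * (r:ℝ))) := by
    have h2' : (q.totient : ℝ) = ∑ d ∈ q.divisors, (μ d : ℝ) * ((q / d : ℕ) : ℝ) := by
      have h4 := congrArg (fun z : ℤ => (z : ℝ)) h2
      simp only [Int.cast_sum, Int.cast_mul, Int.cast_natCast] at h4
      convert h4 using 1
    rw [h2', Finset.sum_div]
    refine Finset.sum_congr rfl fun d hd => ?_
    have hd0 : (d:ℝ) ≠ 0 := by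
      exact_mod_cast (Nat.pos_of_mem_divisors hd).ne'
    rw [Nat.cast_div (Nat.dvd_of_mem_divisors hd) hd0]
    field_simp
  rw [hL, hR, ← Finset.sum_sub_distrib]
  calc |∑ d ∈ q.divisors, ((μ d : ℝ) *
          (((Finset.Icc 1 q).filter (fun a => d ∣ a ∧ (a:ℤ) ≡ c [ZMOD r])).card : ℝ)
        - (μ d : ℝ) * ((q:ℝ) / ((d:ℝ) * (r:ℝ))))|
      ≤ ∑ d ∈ q.divisors, |((μ d : ℝ) *
          (((Finset.Icc 1 q).filter (fun a => d ∣ a ∧ (a:ℤ) ≡ c [ZMOD r])).card : ℝ)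
        - (μ d : ℝ) * ((q:ℝ) / ((d:ℝ) * (r:ℝ))))| := Finset.abs_sum_le_sum_abs _ _
    _ ≤ ∑ _d ∈ q.divisors, (1:ℝ) := by
        refine Finset.sum_le_sum fun d hd => ?_
        have hd0 : 0 < d := Nat.pos_of_mem_divisors hd
        have hdc : Nat.Coprime d r :=
          Nat.Coprime.coprime_dvd_left (Nat.dvd_of_mem_divisors hd) hrq.symm
        obtain ⟨v, hv⟩ := aux_crt d r hdc c
        have hcards : ((Finset.Icc 1 q).filter (fun a => d ∣ a ∧ (a:ℤ) ≡ c [ZMOD r])).card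
            = ((Finset.Ioc (0:ℤ) (q:ℤ)).filter (fun x => x ≡ v [ZMOD ((d:ℤ) * r)])).card := by
          rw [aux_cast q d r c]
          congr 1
          exact Finset.filter_congr fun x _ => hv x
        have hint := aux_interval ((d:ℤ) * r) (by positivity) v q
        have hcast : (((d:ℤ) * (r:ℤ) : ℤ) : ℝ) = (d:ℝ) * (r:ℝ) := by push_cast; ring
        rw [hcast] at hint
        rw [← mul_sub, abs_mul]
        have hmu : |(μ d : ℝ)| ≤ 1 := by
          have := abs_moebius_le_one (n := d)
          exact_mod_cast this
        calc |(μ d : ℝ)| * |(((Finset.Icc 1 q).filter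
                (fun a => d ∣ a ∧ (a:ℤ) ≡ c [ZMOD r])).card : ℝ)
              - (q:ℝ) / ((d:ℝ) * (r:ℝ))|
            ≤ 1 * 1 := by
              refine mul_le_mul hmu ?_ (abs_nonneg _) zero_le_one
              rw [hcards]
              exact hint
          _ = 1 := mul_one 1
    _ = (q.divisors.card : ℝ) := by
        rw [Finset.sum_const, nsmul_eq_mul, mul_one]
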